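/- arXiv:0710.2496 — 2 statements merged into one kernel-verified Lean document; each statement's English description precedes it below -/
import Mathlib

section
/- Let (X_1,Y_1), (X_2,Y_2), … be a stationary ergodic sequence of ℝ×ℝ-valued random variables with E|Y_1| < ∞, let μ(A) = P(X_1 ∈ A), and let m(t) = E[Y_1 | X_1 = t] (a version of the conditional expectation, so that ∫_A m dμ = E[Y_1·1{X_1 ∈ A}] for all Borel A). Then with probability one the sample path satisfies ((X_1,X_2,…),(Y_1,Y_2,…)) ∈ Ω(μ,m): for every t ∈ ℝ, (1/n)∑_{i=1}^n 1{X_i ≤ t} → μ((−∞,t]), (1/n)∑_{i=1}^n 1{X_i = t} → μ({t}), (1/n)∑_{i=1}^n Y_i·1{X_i ≤ t} → ∫_{(−∞,t]} m dμ, and (1/n)∑_{i=1}^n Y_i·1{X_i = t} → ∫_{{t}} m dμ. -/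
/-!
Birkhoff's pointwise ergodic theorem (via Garsia's maximal inequality), applied to the shift,
gives for each fixed Borel set `A` almost sure convergence of the empirical averages of
`1{X ∈ A}`, `Y⁺ 1{X ∈ A}` and `Y⁻ 1{X ∈ A}` to the corresponding first marginals of `P`,
`Y⁺ • P` and `Y⁻ • P`, where `P` is the law of `(X₁, Y₁)`. Splitting `Y = Y⁺ - Y⁻` makes each
empirical set function monotone in `A`, so convergence on the half-lines `(-∞, t]` and
`(-∞, t)` for the countably many `t` that are rational or atoms of these marginals extends to
every `t` by bracketing; singletons are differences of such half-lines.
-/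

open MeasureTheory Filter Set

noncomputable section

/-- Empirical distribution of the first `n` terms of `x`. -/
def muHat (x : ℕ → ℝ) (n : ℕ) (A : Set ℝ) : ℝ :=
  (∑ i ∈ Finset.range n, A.indicator (fun _ => (1 : ℝ)) (x i)) / n

/-- Joint sample average `ν̂_n(A) = (1/n) ∑_{i=1}^n y_i · 1{x_i ∈ A}`. -/
def nuHat (x y : ℕ → ℝ) (n : ℕ) (A : Set ℝ) : ℝ :=
  (∑ i ∈ Finset.range n, A.indicator (fun _ => y i) (x i)) / n

/-- The signed measure `ν(A) = ∫_A m dμ`. -/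
def nuM (μ : Measure ℝ) (m : ℝ → ℝ) (A : Set ℝ) : ℝ := ∫ t in A, m t ∂μ

/-- `(x,y) ∈ Ω(μ,m)`: `x` has limiting distribution `μ` and `(x,y)` has
limiting regression `m`. -/
def memOmega (μ : Measure ℝ) (m : ℝ → ℝ) (x y : ℕ → ℝ) : Prop :=
  (∀ t : ℝ, Tendsto (fun n => muHat x n (Iic t)) atTop (nhds (μ (Iic t)).toReal)) ∧
  (∀ t : ℝ, Tendsto (fun n => muHat x n {t}) atTop (nhds (μ {t}).toReal)) ∧
  (∀ t : ℝ, Tendsto (fun n => nuHat x y n (Iic t)) atTop (nhds (nuM μ m (Iic t)))) ∧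
  (∀ t : ℝ, Tendsto (fun n => nuHat x y n {t}) atTop (nhds (nuM μ m {t})))

/-- The shift on the path space of an `ℝ×ℝ`-valued process. -/
def shiftSeq : (ℕ → ℝ × ℝ) → (ℕ → ℝ × ℝ) := fun s i => s (i + 1)

open Topology

section Birkhoff

variable {α : Type*} {T : α → α} {g : α → ℝ}

theorem partialSups_birkhoffSum_nonneg (N : ℕ) (x : α) :
    0 ≤ partialSups (birkhoffSum T g) N x :=
  (birkhoffSum_zero T g x).symm.trans_le (le_partialSups_of_le (birkhoffSum T g) N.zero_le x)

theorem partialSups_birkhoffSum_le_add {N : ℕ} {x : α}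
    (hx : 0 < partialSups (birkhoffSum T g) N x) :
    partialSups (birkhoffSum T g) N x ≤ g x + partialSups (birkhoffSum T g) N (T x) := by
  rw [Pi.partialSups_apply] at hx ⊢
  obtain ⟨n, hnN, hn⟩ := exists_partialSups_eq (fun n => birkhoffSum T g n x) N
  rw [hn] at hx ⊢
  cases n with
  | zero => simp at hx
  | succ k =>
    rw [birkhoffSum_succ', Pi.partialSups_apply]
    gcongr
    exact le_partialSups_of_le (fun n => birkhoffSum T g n (T x)) (by omega : k ≤ N)

theorem bddAbove_range_birkhoffSum_apply_iff (x : α) :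
    BddAbove (range fun n => birkhoffSum T g n (T x)) ↔
      BddAbove (range fun n => birkhoffSum T g n x) := by
  simp only [bddAbove_def, forall_mem_range]
  constructor
  · rintro ⟨C, hC⟩
    refine ⟨max 0 (g x + C), fun n => ?_⟩
    cases n with
    | zero => simp
    | succ n => exact le_max_of_le_right (by rw [birkhoffSum_succ']; linarith [hC n])
  · rintro ⟨C, hC⟩
    exact ⟨C - g x, fun n => by linarith [hC (n + 1), birkhoffSum_succ' T g n x]⟩

variable [MeasurableSpace α] {μ : Measure α}

theorem measurable_birkhoffSum (hT : Measurable T) (hg : Measurable g) (n : ℕ) :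
    Measurable (birkhoffSum T g n) :=
  Finset.measurable_sum _ fun k _ => hg.comp (hT.iterate k)

theorem integrable_birkhoffSum (hT : MeasurePreserving T μ μ) (hg : Integrable g μ) (n : ℕ) :
    Integrable (birkhoffSum T g n) μ :=
  integrable_finsetSum _ fun k _ => (hT.iterate k).integrable_comp_of_integrable hg

theorem measurable_partialSups_birkhoffSum (hT : Measurable T) (hg : Measurable g) (N : ℕ) :
    Measurable (partialSups (birkhoffSum T g) N) := by
  rw [partialSups_apply]
  exact Finset.measurable_sup' _ fun n _ => measurable_birkhoffSum hT hg n

theorem integrable_partialSups_birkhoffSum (hT : MeasurePreserving T μ μ) (hg : Integrable g μ)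
    (N : ℕ) : Integrable (partialSups (birkhoffSum T g) N) μ := by
  rw [partialSups_apply]
  exact Finset.sup'_induction (p := fun f => Integrable f μ) _ _ (fun _ hf _ hf' => hf.sup hf')
    fun n _ => integrable_birkhoffSum hT hg n

theorem setIntegral_nonneg_of_partialSups_birkhoffSum_pos (hT : MeasurePreserving T μ μ)
    (hgm : Measurable g) (hg : Integrable g μ) (N : ℕ) :
    0 ≤ ∫ x in {x | 0 < partialSups (birkhoffSum T g) N x}, g x ∂μ := by
  set M := partialSups (birkhoffSum T g) N
  set E := {x | 0 < M x}
  have hE : MeasurableSet E :=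
    measurableSet_lt measurable_const (measurable_partialSups_birkhoffSum hT.measurable hgm N)
  have hM : Integrable M μ := integrable_partialSups_birkhoffSum hT hg N
  have hMT : Integrable (fun x => M (T x)) μ := hT.integrable_comp_of_integrable hM
  have hM_comp : ∫ x, M (T x) ∂μ = ∫ x, M x ∂μ := by
    rw [← integral_map hT.measurable.aemeasurable
      (by rw [hT.map_eq]; exact hM.aestronglyMeasurable), hT.map_eq]
  have key : ∫ x, M x ∂μ ≤ ∫ x in E, g x ∂μ + ∫ x, M x ∂μ :=
    calc ∫ x, M x ∂μ = ∫ x in E, M x ∂μ :=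
          (setIntegral_eq_integral_of_forall_compl_eq_zero fun x hx =>
            le_antisymm (not_lt.1 hx) (partialSups_birkhoffSum_nonneg N x)).symm
      _ ≤ ∫ x in E, (g x + M (T x)) ∂μ :=
          setIntegral_mono_on hM.integrableOn (hg.integrableOn.add hMT.integrableOn) hE
            fun x hx => partialSups_birkhoffSum_le_add hx
      _ = ∫ x in E, g x ∂μ + ∫ x in E, M (T x) ∂μ :=
          integral_add hg.integrableOn hMT.integrableOn
      _ ≤ ∫ x in E, g x ∂μ + ∫ x, M (T x) ∂μ := (add_le_add_iff_left _).2
          (setIntegral_le_integral hMT (ae_of_all _ fun x => partialSups_birkhoffSum_nonneg N _))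
      _ = ∫ x in E, g x ∂μ + ∫ x, M x ∂μ := by rw [hM_comp]
  linarith

theorem integral_nonneg_of_ae_not_bddAbove_birkhoffSum (hT : MeasurePreserving T μ μ)
    (hgm : Measurable g) (hg : Integrable g μ)
    (h : ∀ᵐ x ∂μ, ¬BddAbove (range fun n => birkhoffSum T g n x)) : 0 ≤ ∫ x, g x ∂μ := by
  set E : ℕ → Set α := fun N => {x | 0 < partialSups (birkhoffSum T g) N x}
  have hE : ∀ N, MeasurableSet (E N) := fun N =>
    measurableSet_lt measurable_const (measurable_partialSups_birkhoffSum hT.measurable hgm N)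
  have hlim : Tendsto (fun N => ∫ x, (E N).indicator g x ∂μ) atTop (𝓝 (∫ x, g x ∂μ)) := by
    refine tendsto_integral_of_dominated_convergence (fun x => ‖g x‖)
      (fun N => (hg.indicator (hE N)).aestronglyMeasurable) hg.norm
      (fun N => ae_of_all _ fun x => norm_indicator_le_norm_self g x) ?_
    filter_upwards [h] with x hx
    obtain ⟨n, hn⟩ : ∃ n, 0 < birkhoffSum T g n x := by
      by_contra! h0
      exact hx ⟨0, forall_mem_range.2 h0⟩
    refine tendsto_const_nhds.congr' ?_
    filter_upwards [eventually_ge_atTop n] with N hN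
    exact (indicator_of_mem (s := E N)
      (hn.trans_le (le_partialSups_of_le (birkhoffSum T g) hN x)) g).symm
  refine ge_of_tendsto' hlim fun N => ?_
  rw [integral_indicator (hE N)]
  exact setIntegral_nonneg_of_partialSups_birkhoffSum_pos hT hgm hg N

/-- Boundedness of the partial sums is a shift-invariant event, so it has measure `0` or `1`, and
measure `0` would force `∫ g ≥ 0` by the maximal inequality. -/
theorem ae_bddAbove_birkhoffSum_of_integral_neg (hT : Ergodic T μ) (hgm : Measurable g)
    (hg : Integrable g μ) (hneg : ∫ x, g x ∂μ < 0) :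
    ∀ᵐ x ∂μ, BddAbove (range fun n => birkhoffSum T g n x) := by
  have hB : MeasurableSet {x | BddAbove (range fun n => birkhoffSum T g n x)} :=
    measurableSet_bddAbove_range fun n => measurable_birkhoffSum hT.measurable hgm n
  rcases hT.ae_empty_or_univ hB (ext fun x => bddAbove_range_birkhoffSum_apply_iff x) with h | h
  · refine absurd (integral_nonneg_of_ae_not_bddAbove_birkhoffSum hT.toMeasurePreserving hgm hg
      ?_) hneg.not_ge
    filter_upwards [h.mem_iff] with x hx using fun hb => hx.1 hb
  · filter_upwards [h.mem_iff] with x hx using hx.2 trivial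

theorem ae_eventually_birkhoffAverage_lt [IsProbabilityMeasure μ] (hT : Ergodic T μ)
    (hgm : Measurable g) (hg : Integrable g μ) {c : ℝ} (hc : ∫ x, g x ∂μ < c) :
    ∀ᵐ x ∂μ, ∀ᶠ n in atTop, birkhoffAverage ℝ T g n x < c := by
  obtain ⟨c', hgc', hc'c⟩ := exists_between hc
  have hneg : ∫ x, (g x - c') ∂μ < 0 := by
    rw [integral_sub hg (integrable_const c'), integral_const, probReal_univ, one_smul]
    linarith
  filter_upwards [ae_bddAbove_birkhoffSum_of_integral_neg hT (hgm.sub measurable_const)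
    (hg.sub (integrable_const c')) hneg] with x ⟨C, hC⟩
  have hlim : Tendsto (fun n : ℕ => C / n + c') atTop (𝓝 c') := by
    simpa using (tendsto_const_nhds.div_atTop tendsto_natCast_atTop_atTop).add_const c'
  filter_upwards [hlim.eventually (gt_mem_nhds hc'c), eventually_gt_atTop 0]
    with n hn hn0
  have hn' : (0 : ℝ) < n := by exact_mod_cast hn0
  have hS : birkhoffSum T g n x - n * c' ≤ C := by
    simpa [birkhoffSum, Finset.sum_sub_distrib] using hC ⟨n, rfl⟩
  refine lt_of_le_of_lt ?_ hn
  rw [birkhoffAverage, smul_eq_mul, ← div_eq_inv_mul, div_le_iff₀ hn', add_mul,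
    div_mul_cancel₀ _ hn'.ne']
  linarith

theorem ae_eventually_lt_birkhoffAverage [IsProbabilityMeasure μ] (hT : Ergodic T μ)
    (hgm : Measurable g) (hg : Integrable g μ) {c : ℝ} (hc : c < ∫ x, g x ∂μ) :
    ∀ᵐ x ∂μ, ∀ᶠ n in atTop, c < birkhoffAverage ℝ T g n x := by
  have hc' : ∫ x, (-g) x ∂μ < -c := by simpa [integral_neg] using hc
  filter_upwards [ae_eventually_birkhoffAverage_lt hT hgm.neg hg.neg hc'] with x hx
  filter_upwards [hx] with n hn
  rw [birkhoffAverage_neg, Pi.neg_apply, Pi.neg_apply] at hn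
  linarith

theorem ae_tendsto_birkhoffAverage_integral [IsProbabilityMeasure μ] (hT : Ergodic T μ)
    (hgm : Measurable g) (hg : Integrable g μ) :
    ∀ᵐ x ∂μ, Tendsto (fun n => birkhoffAverage ℝ T g n x) atTop (𝓝 (∫ x, g x ∂μ)) := by
  have upper : ∀ᵐ x ∂μ, ∀ q : ℚ, ∫ x, g x ∂μ < q →
      ∀ᶠ n in atTop, birkhoffAverage ℝ T g n x < q := by
    refine ae_all_iff.2 fun q => ?_
    by_cases hq : ∫ x, g x ∂μ < q
    · filter_upwards [ae_eventually_birkhoffAverage_lt hT hgm hg hq] with x hx _ using hx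
    · exact ae_of_all _ fun x h => absurd h hq
  have lower : ∀ᵐ x ∂μ, ∀ q : ℚ, (q : ℝ) < ∫ x, g x ∂μ →
      ∀ᶠ n in atTop, (q : ℝ) < birkhoffAverage ℝ T g n x := by
    refine ae_all_iff.2 fun q => ?_
    by_cases hq : (q : ℝ) < ∫ x, g x ∂μ
    · filter_upwards [ae_eventually_lt_birkhoffAverage hT hgm hg hq] with x hx _ using hx
    · exact ae_of_all _ fun x h => absurd h hq
  filter_upwards [upper, lower] with x hu hl
  refine tendsto_order.2 ⟨fun b hb => ?_, fun b hb => ?_⟩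
  · obtain ⟨q, hbq, hq⟩ := exists_rat_btwn hb
    exact (hl q hq).mono fun n hn => hbq.trans hn
  · obtain ⟨q, hq, hqb⟩ := exists_rat_btwn hb
    exact (hu q hq).mono fun n hn => hn.trans hqb

end Birkhoff

section Thresholds

variable {ρ : Measure ℝ} [IsFiniteMeasure ρ]

theorem exists_rat_lt_and_lt_measureReal_Iic {t b : ℝ} (hb : b < ρ.real (Iio t)) :
    ∃ q : ℚ, (q : ℝ) < t ∧ b < ρ.real (Iic q) := by
  obtain ⟨u, hu_mono, hu_lt, hu_lim⟩ := Real.exists_seq_rat_strictMono_tendsto t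
  have hmono : Monotone fun k => Iic (u k : ℝ) := fun i j hij =>
    Iic_subset_Iic.2 (Rat.cast_le.2 (hu_mono.monotone hij))
  have hlim := (ENNReal.tendsto_toReal (measure_ne_top ρ _)).comp
    (tendsto_measure_iUnion_atTop (μ := ρ) hmono)
  rw [iUnion_Iic_eq_Iio_of_lt_of_tendsto hu_lt hu_lim] at hlim
  obtain ⟨k, hk⟩ := (hlim.eventually (lt_mem_nhds hb)).exists
  exact ⟨u k, hu_lt k, hk⟩

theorem exists_lt_rat_and_measureReal_Iio_lt {t b : ℝ} (hb : ρ.real (Iic t) < b) :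
    ∃ q : ℚ, t < q ∧ ρ.real (Iio q) < b := by
  obtain ⟨u, hu_anti, hu_gt, hu_lim⟩ := Real.exists_seq_rat_strictAnti_tendsto t
  have hanti : Antitone fun k => Iio (u k : ℝ) := fun i j hij =>
    Iio_subset_Iio (Rat.cast_le.2 (hu_anti.antitone hij))
  have hinter : ⋂ k, Iio (u k : ℝ) = Iic t := by
    simpa only [compl_iUnion, compl_Ici, compl_Ioi] using
      congrArg compl (iUnion_Ici_eq_Ioi_of_lt_of_tendsto hu_gt hu_lim)
  have hlim := (ENNReal.tendsto_toReal (measure_ne_top ρ _)).comp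
    (tendsto_measure_iInter_atTop (μ := ρ) (fun _ => measurableSet_Iio.nullMeasurableSet) hanti
      ⟨0, measure_ne_top ρ _⟩)
  rw [hinter] at hlim
  obtain ⟨k, hk⟩ := (hlim.eventually (gt_mem_nhds hb)).exists
  exact ⟨u k, hu_gt k, hk⟩

theorem tendsto_measureReal_Iic_Iio_of_forall_rat {V : ℕ → Set ℝ → ℝ} (hV : ∀ n, Monotone (V n))
    {t : ℝ} (ht : ρ {t} = 0)
    (hIic : ∀ q : ℚ, Tendsto (fun n => V n (Iic q)) atTop (𝓝 (ρ.real (Iic q))))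
    (hIio : ∀ q : ℚ, Tendsto (fun n => V n (Iio q)) atTop (𝓝 (ρ.real (Iio q)))) :
    Tendsto (fun n => V n (Iic t)) atTop (𝓝 (ρ.real (Iic t))) ∧
      Tendsto (fun n => V n (Iio t)) atTop (𝓝 (ρ.real (Iio t))) := by
  have hIio_eq : ρ.real (Iio t) = ρ.real (Iic t) := measureReal_congr (Iio_ae_eq_Iic' ht)
  have hle : ∀ n, V n (Iio t) ≤ V n (Iic t) := fun n => hV n Iio_subset_Iic_self
  have lower : ∀ b < ρ.real (Iic t), ∀ᶠ n in atTop, b < V n (Iio t) := by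
    intro b hb
    obtain ⟨q, hqt, hq⟩ := exists_rat_lt_and_lt_measureReal_Iic (hIio_eq ▸ hb)
    filter_upwards [(hIic q).eventually (lt_mem_nhds hq)] with n hn
    exact hn.trans_le (hV n (Iic_subset_Iio.2 hqt))
  have upper : ∀ b > ρ.real (Iic t), ∀ᶠ n in atTop, V n (Iic t) < b := by
    intro b hb
    obtain ⟨q, htq, hq⟩ := exists_lt_rat_and_measureReal_Iio_lt hb
    filter_upwards [(hIio q).eventually (gt_mem_nhds hq)] with n hn
    exact (hV n (Iic_subset_Iio.2 htq)).trans_lt hn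
  constructor
  · exact tendsto_order.2 ⟨fun b hb => (lower b hb).mono fun n hn => hn.trans_le (hle n), upper⟩
  · rw [hIio_eq]
    exact tendsto_order.2 ⟨lower, fun b hb => (upper b hb).mono fun n hn => (hle n).trans_lt hn⟩

theorem ae_forall_tendsto_measureReal_Iic_Iio {Ω : Type*} [MeasurableSpace Ω] {μ : Measure Ω}
    {V : Ω → ℕ → Set ℝ → ℝ} (hV : ∀ ω n, Monotone (V ω n))
    (hIic : ∀ t, ∀ᵐ ω ∂μ, Tendsto (fun n => V ω n (Iic t)) atTop (𝓝 (ρ.real (Iic t))))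
    (hIio : ∀ t, ∀ᵐ ω ∂μ, Tendsto (fun n => V ω n (Iio t)) atTop (𝓝 (ρ.real (Iio t)))) :
    ∀ᵐ ω ∂μ, ∀ t, Tendsto (fun n => V ω n (Iic t)) atTop (𝓝 (ρ.real (Iic t))) ∧
      Tendsto (fun n => V ω n (Iio t)) atTop (𝓝 (ρ.real (Iio t))) := by
  -- Bracketing by rationals only works at non-atoms; the atoms are countable and added to `D`.
  set D := range ((↑) : ℚ → ℝ) ∪ {t | 0 < ρ {t}}
  have hD : D.Countable := (countable_range _).union
    (Measure.countable_meas_pos_of_disjoint_iUnion (fun _ => measurableSet_singleton _)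
      fun _ _ h => disjoint_singleton.2 h)
  have hDae : ∀ᵐ ω ∂μ, ∀ d ∈ D, Tendsto (fun n => V ω n (Iic d)) atTop (𝓝 (ρ.real (Iic d))) ∧
      Tendsto (fun n => V ω n (Iio d)) atTop (𝓝 (ρ.real (Iio d))) :=
    (ae_ball_iff hD).2 fun d _ => (hIic d).and (hIio d)
  filter_upwards [hDae] with ω hω t
  by_cases ht : ρ {t} = 0
  · exact tendsto_measureReal_Iic_Iio_of_forall_rat (hV ω) ht
      (fun q => (hω q (Or.inl ⟨q, rfl⟩)).1) (fun q => (hω q (Or.inl ⟨q, rfl⟩)).2)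
  · exact hω t (Or.inr (pos_iff_ne_zero.2 ht))

end Thresholds

section Empirical

theorem nuHat_mono {x w : ℕ → ℝ} (hw : ∀ i, 0 ≤ w i) (n : ℕ) : Monotone (nuHat x w n) :=
  fun _ _ hAB => div_le_div_of_nonneg_right
    (Finset.sum_le_sum fun i _ => indicator_le_indicator_of_subset hAB (fun _ => hw i) _)
    n.cast_nonneg

theorem nuHat_sdiff (x w : ℕ → ℝ) (n : ℕ) {A B : Set ℝ} (h : A ⊆ B) :
    nuHat x w n (B \ A) = nuHat x w n B - nuHat x w n A := by
  simp only [nuHat, indicator_sdiff h, Pi.sub_apply, Finset.sum_sub_distrib, sub_div]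

theorem nuHat_eq_posPart_sub_negPart (x y : ℕ → ℝ) (n : ℕ) (A : Set ℝ) :
    nuHat x y n A = nuHat x (fun i => max (y i) 0) n A - nuHat x (fun i => max (-y i) 0) n A := by
  simp only [nuHat, ← sub_div, ← Finset.sum_sub_distrib]
  congr 1
  refine Finset.sum_congr rfl fun i _ => ?_
  by_cases h : x i ∈ A <;> simp [h]

end Empirical

section WeightedMarginal

variable {P : Measure (ℝ × ℝ)} {w : ℝ × ℝ → ℝ}

def weightedMarginal (P : Measure (ℝ × ℝ)) (w : ℝ × ℝ → ℝ) : Measure ℝ :=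
  (P.withDensity fun p => ENNReal.ofReal (w p)).map Prod.fst

theorem isFiniteMeasure_weightedMarginal (hw : HasFiniteIntegral w P) :
    IsFiniteMeasure (weightedMarginal P w) := by
  have := isFiniteMeasure_withDensity_ofReal hw
  unfold weightedMarginal
  infer_instance

theorem weightedMarginal_real_apply (hw : AEStronglyMeasurable w P) (hw0 : 0 ≤ w) {A : Set ℝ}
    (hA : MeasurableSet A) :
    (weightedMarginal P w).real A = ∫ p, (Prod.fst ⁻¹' A).indicator w p ∂P := by
  rw [integral_indicator (measurable_fst hA), measureReal_def, weightedMarginal,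
    Measure.map_apply measurable_fst hA, withDensity_apply _ (measurable_fst hA),
    integral_eq_lintegral_of_nonneg_ae (ae_of_all _ hw0) hw.restrict]

theorem weightedMarginal_posPart_real_sub_negPart_real (hP : Integrable Prod.snd P) {A : Set ℝ}
    (hA : MeasurableSet A) :
    (weightedMarginal P fun p => max p.2 0).real A -
        (weightedMarginal P fun p => max (-p.2) 0).real A =
      ∫ p, (Prod.fst ⁻¹' A).indicator Prod.snd p ∂P := by
  rw [weightedMarginal_real_apply hP.pos_part.1 (fun _ => le_max_right _ _) hA,
    weightedMarginal_real_apply hP.neg_part.1 (fun _ => le_max_right _ _) hA,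
    ← integral_sub (hP.pos_part.indicator (measurable_fst hA))
      (hP.neg_part.indicator (measurable_fst hA))]
  congr 1 with p
  by_cases h : p ∈ Prod.fst ⁻¹' A <;> simp [h]

theorem weightedMarginal_one : weightedMarginal P (fun _ => 1) = P.map Prod.fst := by
  simp [weightedMarginal]

end WeightedMarginal

section Shift

theorem shiftSeq_iterate_apply (i : ℕ) (s : ℕ → ℝ × ℝ) (j : ℕ) :
    shiftSeq^[i] s j = s (j + i) := by
  induction i generalizing s with
  | zero => rfl
  | succ i ih => rw [Function.iterate_succ_apply, ih]; rfl

variable {μ : Measure (ℕ → ℝ × ℝ)} [IsProbabilityMeasure μ]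

theorem ae_tendsto_sum_div_of_ergodic_shiftSeq (herg : Ergodic shiftSeq μ) {f : ℝ × ℝ → ℝ}
    (hf : Measurable f) (hfi : Integrable f (μ.map (· 0))) :
    ∀ᵐ s ∂μ, Tendsto (fun n : ℕ => (∑ i ∈ Finset.range n, f (s i)) / n) atTop
      (𝓝 (∫ p, f p ∂μ.map (· 0))) := by
  have h0 : Measurable fun s : ℕ → ℝ × ℝ => s 0 := measurable_pi_apply 0
  rw [integral_map h0.aemeasurable hf.aestronglyMeasurable]
  filter_upwards [ae_tendsto_birkhoffAverage_integral herg (hf.comp h0) (hfi.comp_measurable h0)]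
    with s hs
  refine hs.congr fun n => ?_
  simp [birkhoffAverage, birkhoffSum, shiftSeq_iterate_apply, div_eq_inv_mul]

theorem ae_forall_tendsto_nuHat_Iic_singleton (herg : Ergodic shiftSeq μ) {w : ℝ × ℝ → ℝ}
    (hwm : Measurable w) (hw0 : 0 ≤ w) (hw : Integrable w (μ.map (· 0))) :
    ∀ᵐ s ∂μ, ∀ t,
      Tendsto (fun n => nuHat (fun i => (s i).1) (fun i => w (s i)) n (Iic t)) atTop
        (𝓝 ((weightedMarginal (μ.map (· 0)) w).real (Iic t))) ∧
      Tendsto (fun n => nuHat (fun i => (s i).1) (fun i => w (s i)) n {t}) atTop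
        (𝓝 ((weightedMarginal (μ.map (· 0)) w).real {t})) := by
  have := isFiniteMeasure_weightedMarginal hw.2
  have hA : ∀ A, MeasurableSet A → ∀ᵐ s ∂μ,
      Tendsto (fun n => nuHat (fun i => (s i).1) (fun i => w (s i)) n A) atTop
        (𝓝 ((weightedMarginal (μ.map (· 0)) w).real A)) := by
    intro A hA
    rw [weightedMarginal_real_apply hw.1 hw0 hA]
    exact ae_tendsto_sum_div_of_ergodic_shiftSeq herg (hwm.indicator (measurable_fst hA))
      (hw.indicator (measurable_fst hA))
  filter_upwards [ae_forall_tendsto_measureReal_Iic_Iio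
    (fun s n => nuHat_mono (fun i => hw0 (s i)) n)
    (fun t => hA _ measurableSet_Iic) (fun t => hA _ measurableSet_Iio)] with s hs t
  refine ⟨(hs t).1, ?_⟩
  rw [← Iic_sdiff_Iio_same, measureReal_sdiff Iio_subset_Iic_self measurableSet_Iio]
  simpa only [nuHat_sdiff _ _ _ Iio_subset_Iic_self] using (hs t).1.sub (hs t).2

end Shift

theorem ergodic_sample_path_in_Omega_general
    (μ : Measure (ℕ → ℝ × ℝ)) [IsProbabilityMeasure μ]
    (herg : Ergodic shiftSeq μ)
    (hY : Integrable (fun s => (s 0).2) μ)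
    (m : ℝ → ℝ)
    (hmVersion : ∀ A : Set ℝ, MeasurableSet A →
      ∫ t in A, m t ∂(μ.map (fun s => (s 0).1)) =
        ∫ s, A.indicator (fun _ => (s 0).2) ((s 0).1) ∂μ) :
    ∀ᵐ s ∂μ,
      memOmega (μ.map (fun s' => (s' 0).1)) m (fun i => (s i).1) (fun i => (s i).2) := by
  set P := μ.map (· 0)
  have h0 : Measurable fun s : ℕ → ℝ × ℝ => s 0 := measurable_pi_apply 0
  have hY' : Integrable Prod.snd P :=
    (integrable_map_measure measurable_snd.aestronglyMeasurable h0.aemeasurable).2 hY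
  have hX : μ.map (fun s => (s 0).1) = weightedMarginal P fun _ => 1 := by
    rw [weightedMarginal_one, Measure.map_map measurable_fst h0]; rfl
  have hν : ∀ A, MeasurableSet A → nuM (μ.map fun s => (s 0).1) m A =
      (weightedMarginal P fun p => max p.2 0).real A -
        (weightedMarginal P fun p => max (-p.2) 0).real A := by
    intro A hA
    rw [weightedMarginal_posPart_real_sub_negPart_real hY' hA, integral_map h0.aemeasurable
      (measurable_snd.indicator (measurable_fst hA)).aestronglyMeasurable]
    exact hmVersion A hA
  filter_upwards [ae_forall_tendsto_nuHat_Iic_singleton herg measurable_const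
      (fun _ => zero_le_one) (integrable_const 1),
    ae_forall_tendsto_nuHat_Iic_singleton herg (w := fun p => max p.2 0)
      (measurable_snd.max measurable_const) (fun _ => le_max_right _ _) hY'.pos_part,
    ae_forall_tendsto_nuHat_Iic_singleton herg (w := fun p => max (-p.2) 0)
      (measurable_snd.neg.max measurable_const) (fun _ => le_max_right _ _) hY'.neg_part]
    with s h1 hpos hneg
  refine ⟨fun t => hX ▸ (h1 t).1, fun t => hX ▸ (h1 t).2, fun t => ?_, fun t => ?_⟩
  · rw [hν _ measurableSet_Iic]
    simpa only [← nuHat_eq_posPart_sub_negPart] using (hpos t).1.sub (hneg t).1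
  · rw [hν _ (measurableSet_singleton t)]
    simpa only [← nuHat_eq_posPart_sub_negPart] using (hpos t).2.sub (hneg t).2

/-- **Proposition 1 (second part).** Let `(X_1,Y_1), (X_2,Y_2), …` be a
stationary ergodic `ℝ×ℝ`-valued process (its law `μ` on path space makes the
shift ergodic) with `E|Y_1| < ∞`.  Let `μX` be the distribution of `X_1` and
let `m` be a version of the conditional expectation `E[Y_1 | X_1 = ·]`, i.e.
`∫_A m dμX = E[Y_1·1{X_1 ∈ A}]` for all Borel `A`.  Then with probability one
the sample path satisfies `((X_i)_i, (Y_i)_i) ∈ Ω(μX, m)`. -/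
theorem ergodic_sample_path_in_Omega
    (μ : Measure (ℕ → ℝ × ℝ)) [IsProbabilityMeasure μ]
    (herg : Ergodic shiftSeq μ)
    (hY : Integrable (fun s => (s 0).2) μ)
    (m : ℝ → ℝ) (hmMeas : Measurable m)
    (hmVersion : ∀ A : Set ℝ, MeasurableSet A →
      ∫ t in A, m t ∂(μ.map (fun s => (s 0).1)) =
        ∫ s, A.indicator (fun _ => (s 0).2) ((s 0).1) ∂μ) :
    ∀ᵐ s ∂μ,
      memOmega (μ.map (fun s' => (s' 0).1)) m (fun i => (s i).1) (fun i => (s i).2) :=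
  ergodic_sample_path_in_Omega_general μ herg hY m hmVersion
end
end

section
/- Let μ be a Borel probability measure on ℝ, let f : ℝ → ℝ be non-decreasing and μ-integrable, let k ≥ 1 and i ≥ 1, and suppose every dyadic cell A ∈ π_k with A ⊆ (−i,i] satisfies μ(A) > 0. Define (f ∘ π_k)(t) = (1/μ(π_k[t])) ∫_{π_k[t]} f dμ. Then f ∘ π_k is non-decreasing on (−i,i] and V(f ∘ π_k : −i, i) ≤ V(f : −i, i). -/
open MeasureTheory Filter Set

noncomputable section

/-- The set of sums `∑_{i=1}^n |h(t_i) − h(t_{i−1})|` over finite sequences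
`a < t_0 < t_1 < ⋯ < t_n = b`. -/
def vSums (h : ℝ → ℝ) (a b : ℝ) : Set ℝ :=
  { s | ∃ (n : ℕ) (t : ℕ → ℝ), (∀ i < n, t i < t (i + 1)) ∧ a < t 0 ∧ t n = b ∧
        s = ∑ i ∈ Finset.range n, |h (t (i + 1)) - h (t i)| }

/-- Total variation `V(h : a, b)` of `h` on `(a, b]`. -/
def totalVar (h : ℝ → ℝ) (a b : ℝ) : ℝ := sSup (vSums h a b)

/-- The dyadic cell `A_{k,j} = ((j−1)·2^{−k}, j·2^{−k}]` of the partition `π_k`. -/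
def dCell (k : ℕ) (j : ℤ) : Set ℝ := Ioc (((j : ℝ) - 1) / 2 ^ k) ((j : ℝ) / 2 ^ k)

/-- For `k ≥ 1`, the cell `π_k[t]` of the dyadic partition `π_k` containing `t`. -/
def dyadCell (k : ℕ) (t : ℝ) : Set ℝ :=
  Ioc (((⌈t * 2 ^ k⌉ : ℝ) - 1) / 2 ^ k) ((⌈t * 2 ^ k⌉ : ℝ) / 2 ^ k)

/-- The conditional averaging `(f ∘ π_k)(t) = (1/μ(π_k[t])) ∫_{π_k[t]} f dμ`. -/
def condAvg (μ : Measure ℝ) (f : ℝ → ℝ) (k : ℕ) (t : ℝ) : ℝ :=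
  (∫ z in dyadCell k t, f z ∂μ) / (μ (dyadCell k t)).toReal

/-!
Every dyadic cell meeting `(-i, i]` lies inside it, so on `(-i, i]` the function `f ∘ π_k` is an
average of the monotone `f` over cells of positive measure; distinct cells are ordered, hence so
are the averages. For a function `g` monotone on `(a, b]` every variation sum telescopes to
`g b - g t₀` with `t₀ ∈ (a, b]`. With `g = f ∘ π_k` we have `g i ≤ f i`, while `g t₀` is at least
the infimum of `f` on the cell of `t₀`, which is `≥ f i - V(f)`.
-/

section Variation

variable {g : ℝ → ℝ} {a b c M : ℝ}

lemma totalVar_nonneg : 0 ≤ totalVar g a b := by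
  refine Real.sSup_nonneg ?_
  rintro s ⟨n, t, -, -, -, rfl⟩
  positivity

lemma abs_sub_mem_vSums (hc : c ∈ Ioc a b) : |g b - g c| ∈ vSums g a b := by
  rcases hc.2.eq_or_lt with rfl | hcb
  · exact ⟨0, fun _ => c, by simp, hc.1, rfl, by simp⟩
  · refine ⟨1, fun m => if m = 0 then c else b, ?_, by simpa using hc.1, by simp, by simp⟩
    intro m hm
    obtain rfl : m = 0 := Nat.lt_one_iff.mp hm
    simpa using hcb

lemma abs_sub_le_totalVar (hg : BddAbove (vSums g a b)) (hc : c ∈ Ioc a b) :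
    |g b - g c| ≤ totalVar g a b :=
  le_csSup hg (abs_sub_mem_vSums hc)

lemma exists_eq_sub_of_mem_vSums (hg : MonotoneOn g (Ioc a b)) {s : ℝ}
    (hs : s ∈ vSums g a b) : ∃ c ∈ Ioc a b, s = g b - g c := by
  obtain ⟨n, t, ht, h0, hn, rfl⟩ := hs
  have htmono : StrictMonoOn t (Iic n) := strictMonoOn_Iic_of_lt_succ ht
  have hmem : ∀ m ≤ n, t m ∈ Ioc a b := fun m hm =>
    ⟨h0.trans_le (htmono.monotoneOn (Nat.zero_le n) hm (Nat.zero_le m)),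
      hn ▸ htmono.monotoneOn hm (le_refl n) hm⟩
  refine ⟨t 0, hmem 0 (Nat.zero_le n), ?_⟩
  have hterm : ∀ m ∈ Finset.range n, |g (t (m + 1)) - g (t m)| = g (t (m + 1)) - g (t m) := by
    intro m hm
    have hm : m < n := Finset.mem_range.mp hm
    exact abs_of_nonneg (sub_nonneg.2 (hg (hmem m hm.le) (hmem (m + 1) hm) (ht m hm).le))
  rw [Finset.sum_congr rfl hterm, Finset.sum_range_sub (fun m => g (t m)), hn]

lemma vSums_le_of_monotoneOn (hg : MonotoneOn g (Ioc a b))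
    (hM : ∀ c ∈ Ioc a b, g b - g c ≤ M) : ∀ s ∈ vSums g a b, s ≤ M := by
  intro s hs
  obtain ⟨c, hc, rfl⟩ := exists_eq_sub_of_mem_vSums hg hs
  exact hM c hc

lemma Monotone.bddAbove_vSums (hg : Monotone g) : BddAbove (vSums g a b) :=
  ⟨g b - g a, vSums_le_of_monotoneOn (hg.monotoneOn _) fun _ hc => by linarith [hg hc.1.le]⟩

end Variation

section Average

variable {α : Type*} [MeasurableSpace α] {μ : Measure α} {f : α → ℝ} {s : Set α} {c : ℝ}

lemma le_setIntegral_div_measureReal (hs : MeasurableSet s) (hμ₀ : μ s ≠ 0) (hμ : μ s ≠ ⊤)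
    (hf : IntegrableOn f s μ) (hc : ∀ x ∈ s, c ≤ f x) : c ≤ (∫ x in s, f x ∂μ) / μ.real s :=
  (le_div_iff₀ (ENNReal.toReal_pos hμ₀ hμ)).2 (setIntegral_ge_of_const_le_real hs hμ hc hf)

lemma setIntegral_div_measureReal_le (hs : MeasurableSet s) (hμ₀ : μ s ≠ 0) (hμ : μ s ≠ ⊤)
    (hf : IntegrableOn f s μ) (hc : ∀ x ∈ s, f x ≤ c) : (∫ x in s, f x ∂μ) / μ.real s ≤ c := by
  have := le_setIntegral_div_measureReal (f := fun x => -f x) hs hμ₀ hμ hf.neg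
    fun x hx => neg_le_neg (hc x hx)
  rwa [integral_neg, neg_div, neg_le_neg_iff] at this

end Average

section Dyadic

variable {k : ℕ}

lemma dyadCell_subset_Ioc {m n : ℤ} {t : ℝ} (ht : t ∈ Ioc (m : ℝ) n) :
    dyadCell k t ⊆ Ioc (m : ℝ) n := by
  have h2 : (0 : ℝ) < 2 ^ k := by positivity
  have hlow : m * 2 ^ k < ⌈t * 2 ^ k⌉ := Int.lt_ceil.mpr (by push_cast; nlinarith [ht.1])
  have hup : ⌈t * 2 ^ k⌉ ≤ n * 2 ^ k := Int.ceil_le.mpr (by push_cast; nlinarith [ht.2])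
  have hlow' : (m : ℝ) * 2 ^ k ≤ ⌈t * 2 ^ k⌉ - 1 := by exact_mod_cast Int.le_sub_one_of_lt hlow
  have hup' : (⌈t * 2 ^ k⌉ : ℝ) ≤ n * 2 ^ k := by exact_mod_cast hup
  apply Ioc_subset_Ioc
  · rwa [le_div_iff₀ h2]
  · rwa [div_le_iff₀ h2]

lemma dyadCell_eq_or_separated {s t : ℝ} (hst : s ≤ t) :
    dyadCell k s = dyadCell k t ∨
      ∃ u, (∀ x ∈ dyadCell k s, x ≤ u) ∧ ∀ y ∈ dyadCell k t, u ≤ y := by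
  rcases (Int.ceil_le_ceil (by gcongr : s * 2 ^ k ≤ t * 2 ^ k)).eq_or_lt with h | h
  · left
    simp only [dyadCell, h]
  · right
    have h' : (⌈s * 2 ^ k⌉ : ℝ) ≤ ⌈t * 2 ^ k⌉ - 1 := by exact_mod_cast Int.le_sub_one_of_lt h
    refine ⟨(⌈s * 2 ^ k⌉ : ℝ) / 2 ^ k, fun x hx => hx.2, fun y hy => ?_⟩
    exact le_trans (by gcongr) hy.1.le

end Dyadic

section CondAvg

variable {μ : Measure ℝ} [IsFiniteMeasure μ] {f : ℝ → ℝ} {k : ℕ} {t c : ℝ}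

lemma le_condAvg (hf : Integrable f μ) (hμ : μ (dyadCell k t) ≠ 0)
    (hc : ∀ z ∈ dyadCell k t, c ≤ f z) : c ≤ condAvg μ f k t :=
  le_setIntegral_div_measureReal measurableSet_Ioc hμ (measure_ne_top μ _) hf.integrableOn hc

lemma condAvg_le (hf : Integrable f μ) (hμ : μ (dyadCell k t) ≠ 0)
    (hc : ∀ z ∈ dyadCell k t, f z ≤ c) : condAvg μ f k t ≤ c :=
  setIntegral_div_measureReal_le measurableSet_Ioc hμ (measure_ne_top μ _) hf.integrableOn hc

lemma condAvg_le_condAvg (hf : Monotone f) (hfi : Integrable f μ) {s : ℝ}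
    (hs : μ (dyadCell k s) ≠ 0) (ht : μ (dyadCell k t) ≠ 0) (hst : s ≤ t) :
    condAvg μ f k s ≤ condAvg μ f k t := by
  rcases dyadCell_eq_or_separated (k := k) hst with heq | ⟨u, hsu, hut⟩
  · rw [condAvg, condAvg, heq]
  · exact (condAvg_le hfi hs fun x hx => hf (hsu x hx)).trans
      (le_condAvg hfi ht fun y hy => hf (hut y hy))

end CondAvg

theorem condAvg_monotone_var_le_general
    (μ : Measure ℝ) [IsProbabilityMeasure μ]
    (f : ℝ → ℝ) (hMono : Monotone f) (hInt : Integrable f μ)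
    (i k : ℕ)
    (hcells : ∀ j : ℤ, dCell k j ⊆ Ioc (-(i : ℝ)) (i : ℝ) → 0 < μ (dCell k j)) :
    MonotoneOn (condAvg μ f k) (Ioc (-(i : ℝ)) (i : ℝ)) ∧
    BddAbove (vSums (condAvg μ f k) (-(i : ℝ)) (i : ℝ)) ∧
      totalVar (condAvg μ f k) (-(i : ℝ)) (i : ℝ) ≤ totalVar f (-(i : ℝ)) (i : ℝ) := by
  set V := totalVar f (-(i : ℝ)) i
  have hsub : ∀ t ∈ Ioc (-(i : ℝ)) i, dyadCell k t ⊆ Ioc (-(i : ℝ)) i := fun t ht => by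
    simpa using dyadCell_subset_Ioc (k := k) (m := -i) (n := i) (by simpa using ht)
  have hpos : ∀ t ∈ Ioc (-(i : ℝ)) i, μ (dyadCell k t) ≠ 0 := fun t ht =>
    (hcells _ (hsub t ht)).ne'
  have hmono : MonotoneOn (condAvg μ f k) (Ioc (-(i : ℝ)) i) := fun s hs t ht hst =>
    condAvg_le_condAvg hMono hInt (hpos s hs) (hpos t ht) hst
  have hf_ge : ∀ z ∈ Ioc (-(i : ℝ)) i, f i - V ≤ f z := fun z hz => by
    linarith [le_abs_self (f i - f z), abs_sub_le_totalVar hMono.bddAbove_vSums hz]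
  have hbound : ∀ c ∈ Ioc (-(i : ℝ)) i, condAvg μ f k i - condAvg μ f k c ≤ V := by
    intro c hc
    have hi : (i : ℝ) ∈ Ioc (-(i : ℝ)) i := ⟨hc.1.trans_le hc.2, le_rfl⟩
    have h_top : condAvg μ f k i ≤ f i :=
      condAvg_le hInt (hpos i hi) fun z hz => hMono (hsub i hi hz).2
    have h_bot : f i - V ≤ condAvg μ f k c :=
      le_condAvg hInt (hpos c hc) fun z hz => hf_ge z (hsub c hc hz)
    linarith
  have hle := vSums_le_of_monotoneOn hmono hbound
  exact ⟨hmono, ⟨V, hle⟩, Real.sSup_le hle totalVar_nonneg⟩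

/-- If `f` is non-decreasing and `μ`-integrable, `k ≥ 1`, `i ≥ 1`, and every
dyadic cell `A ∈ π_k` with `A ⊆ (−i,i]` has `μ(A) > 0`, then the conditional
averaging `f ∘ π_k` is non-decreasing on `(−i,i]` and
`V(f ∘ π_k : −i, i) ≤ V(f : −i, i)`. -/
theorem condAvg_monotone_var_le
    (μ : Measure ℝ) [IsProbabilityMeasure μ]
    (f : ℝ → ℝ) (hMono : Monotone f) (hInt : Integrable f μ)
    (i k : ℕ) (hi : 1 ≤ i) (hk : 1 ≤ k)
    (hcells : ∀ j : ℤ, dCell k j ⊆ Ioc (-(i : ℝ)) (i : ℝ) → 0 < μ (dCell k j)) :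
    MonotoneOn (condAvg μ f k) (Ioc (-(i : ℝ)) (i : ℝ)) ∧
    BddAbove (vSums (condAvg μ f k) (-(i : ℝ)) (i : ℝ)) ∧
      totalVar (condAvg μ f k) (-(i : ℝ)) (i : ℝ) ≤ totalVar f (-(i : ℝ)) (i : ℝ) :=
  condAvg_monotone_var_le_general μ f hMono hInt i k hcells
end
end
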